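/- arXiv:1908.05064 — 2 statements merged into one kernel-verified Lean document; each statement's English description precedes it below -/
import Mathlib

section
/- For every n ≥ 1, −n ≤ m ≤ n, the following integral identities hold on the unit sphere: ∫_𝕊 conj(Y_{n−1}^q) Y_n^m ν ds = a_{n−1,m}^q/(2n+1) and ∫_𝕊 conj(Y_{n−1}^q) ∇_𝕊 Y_n^m ds = ((n+1)/(2n+1)) a_{n−1,m}^q for −(n−1) ≤ q ≤ n−1; ∫_𝕊 conj(Y_{n+1}^q) Y_n^m ν ds = c_{n+1,m}^q/(2n+1) and ∫_𝕊 conj(Y_{n+1}^q) ∇_𝕊 Y_n^m ds = (−n/(2n+1)) c_{n+1,m}^q for −(n+1) ≤ q ≤ n+1; and for every p ≥ 0 with p ∉ {n−1, n+1} and −p ≤ q ≤ p, ∫_𝕊 conj(Y_p^q) Y_n^m ν ds = 0 and ∫_𝕊 conj(Y_p^q) ∇_𝕊 Y_n^m ds = 0. -/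
noncomputable section
open MeasureTheory Metric MvPolynomial Filter
open scoped Topology ComplexConjugate

/-- Euclidean space `ℝ³`. -/
abbrev E3 : Type := EuclideanSpace ℝ (Fin 3)

/-- The gradient of a complex-valued function on `ℝ³`, as a complex 3-vector.
For a `0`-homogeneous function this is, on the unit sphere, the surface gradient `∇_𝕊`. -/
def cgrad (f : E3 → ℂ) (x : E3) : Fin 3 → ℂ :=
  fun i => fderiv ℝ f x (EuclideanSpace.single i 1)

/-- The Hessian matrix `∂_i ∂_j f` of a complex-valued function on `ℝ³`. -/
def hessC (f : E3 → ℂ) (x : E3) : Fin 3 → Fin 3 → ℂ :=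
  fun i j => cgrad (fun y => cgrad f y j) x i

/-- `P` is a complex homogeneous harmonic polynomial of degree `n` in 3 variables. -/
def IsHarmonicHom (n : ℕ) (P : MvPolynomial (Fin 3) ℂ) : Prop :=
  P.IsHomogeneous n ∧ (∑ i : Fin 3, pderiv i (pderiv i P)) = 0

/-- An (orthonormal, complete) family of spherical harmonics `Y n m` (`-n ≤ m ≤ n`),
each given via its 0-homogeneous extension to `ℝ³ \ {0}`:
`Y n m` is 0-homogeneous, agrees on the unit sphere `𝕊` with a homogeneous harmonic
polynomial of degree `n`, the family is orthonormal in `L²(𝕊)` (with respect to the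
surface measure, i.e. the 2-dimensional Hausdorff measure `μH[2]`), and for each `n`
the functions `Y n m` span the degree-`n` spherical harmonics. -/
structure SphHarmFamily (Y : ℕ → ℤ → E3 → ℂ) : Prop where
  homog : ∀ (n : ℕ) (m : ℤ) (t : ℝ), 0 < t → ∀ x : E3, x ≠ 0 → Y n m (t • x) = Y n m x
  harmonic_poly : ∀ (n : ℕ) (m : ℤ), m ∈ Finset.Icc (-(n:ℤ)) (n:ℤ) →
    ∃ P : MvPolynomial (Fin 3) ℂ, IsHarmonicHom n P ∧
      ∀ x ∈ sphere (0:E3) 1, Y n m x = eval (fun i => ((x i : ℝ) : ℂ)) P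
  orthonormal : ∀ (n : ℕ) (m : ℤ) (n' : ℕ) (m' : ℤ),
    m ∈ Finset.Icc (-(n:ℤ)) (n:ℤ) → m' ∈ Finset.Icc (-(n':ℤ)) (n':ℤ) →
    (∫ x in sphere (0:E3) 1, conj (Y n m x) * Y n' m' x ∂μH[2]) =
      if n = n' ∧ m = m' then 1 else 0
  span : ∀ (n : ℕ) (P : MvPolynomial (Fin 3) ℂ), IsHarmonicHom n P →
    ∃ c : ℤ → ℂ, ∀ x ∈ sphere (0:E3) 1,
      eval (fun i => ((x i : ℝ) : ℂ)) P = ∑ m ∈ Finset.Icc (-(n:ℤ)) (n:ℤ), c m * Y n m x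

/-
On the sphere the two expansions can be solved for the unknowns:
`(2n+1) Y_n^m ν = ℐ_{n-1}^m + 𝒩_{n+1}^m` and `(2n+1) ∇_𝕊 Y_n^m = (n+1) ℐ_{n-1}^m - n 𝒩_{n+1}^m`.
Pairing with `conj Y_p^q` and using orthonormality picks out the coefficient of `Y_p^q` in
`ℐ_{n-1}^m` (if `p = n - 1`) or in `𝒩_{n+1}^m` (if `p = n + 1`). All integrals are finite
because spherical harmonics are continuous on the sphere and the sphere has finite `μH[2]`
measure, being a Lipschitz image of a square under spherical coordinates.
-/

def sphericalCoords (p : Fin 2 → ℝ) : E3 :=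
  !₂[Real.sin (p 0) * Real.cos (p 1), Real.sin (p 0) * Real.sin (p 1), Real.cos (p 0)]

lemma contDiff_sphericalCoords {k : WithTop ℕ∞} : ContDiff ℝ k sphericalCoords :=
  contDiff_euclidean.2 fun i => by
    fin_cases i <;>
      simp only [sphericalCoords, Fin.zero_eta, Fin.mk_one, Fin.reduceFinMk, Fin.isValue,
        Matrix.cons_val_zero, Matrix.cons_val_one, Matrix.cons_val] <;>
      fun_prop

lemma sphere_subset_image_sphericalCoords :
    sphere (0:E3) 1 ⊆ sphericalCoords '' closedBall 0 Real.pi := by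
  intro x hx
  have hx2 : x 0 ^ 2 + x 1 ^ 2 + x 2 ^ 2 = 1 := by
    have := EuclideanSpace.real_norm_sq_eq x
    simp_all only [mem_sphere_iff_norm, sub_zero, one_pow, Fin.sum_univ_three]
  set w : ℂ := ⟨x 0, x 1⟩
  have hw : ‖w‖ = Real.sin (Real.arccos (x 2)) := by
    rw [Real.sin_arccos, Complex.norm_def, Complex.normSq_mk]
    congr 1; nlinarith
  refine ⟨![Real.arccos (x 2), w.arg], ?_, ?_⟩
  · rw [mem_closedBall_zero_iff, pi_norm_le_iff_of_nonneg Real.pi_pos.le, Fin.forall_fin_two]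
    simp only [Matrix.cons_val_zero, Matrix.cons_val_one, Real.norm_eq_abs, abs_le]
    exact ⟨⟨by linarith [Real.arccos_nonneg (x 2), Real.pi_pos], Real.arccos_le_pi _⟩,
      (Complex.neg_pi_lt_arg w).le, Complex.arg_le_pi w⟩
  · have h2 : Real.cos (Real.arccos (x 2)) = x 2 :=
      Real.cos_arccos (by nlinarith) (by nlinarith)
    ext i; fin_cases i
    · simp [sphericalCoords, ← hw, Complex.norm_mul_cos_arg, w]
    · simp [sphericalCoords, ← hw, Complex.norm_mul_sin_arg, w]
    · simpa [sphericalCoords] using h2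

lemma hausdorffMeasure_sphere_lt_top : μH[2] (sphere (0:E3) 1) < ⊤ := by
  have hK : IsCompact (closedBall (0 : Fin 2 → ℝ) Real.pi) := isCompact_closedBall _ _
  obtain ⟨C, hC⟩ := (contDiff_sphericalCoords (k := 1)).locallyLipschitz.locallyLipschitzOn
    |>.exists_lipschitzOnWith_of_compact hK
  calc μH[2] (sphere (0:E3) 1)
      ≤ μH[2] (sphericalCoords '' closedBall 0 Real.pi) :=
        measure_mono sphere_subset_image_sphericalCoords
    _ ≤ C ^ (2:ℝ) * μH[2] (closedBall (0 : Fin 2 → ℝ) Real.pi) :=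
        hC.hausdorffMeasure_image_le zero_le_two
    _ < ⊤ := by
        have := hausdorffMeasure_pi_real (ι := Fin 2)
        simp only [Fintype.card_fin, Nat.cast_ofNat] at this
        rw [this]
        exact ENNReal.mul_lt_top (by simp) hK.measure_lt_top

namespace SphHarmFamily

variable {Y : ℕ → ℤ → E3 → ℂ}

lemma continuousOn_sphere (hY : SphHarmFamily Y) {n : ℕ} {m : ℤ}
    (hm : m ∈ Finset.Icc (-(n:ℤ)) n) : ContinuousOn (Y n m) (sphere 0 1) := by
  obtain ⟨P, -, hP⟩ := hY.harmonic_poly n m hm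
  refine ContinuousOn.congr ?_ hP
  exact (MvPolynomial.continuous_eval P).comp (by fun_prop) |>.continuousOn

lemma integrableOn_conj_mul (hY : SphHarmFamily Y) {p k : ℕ} {q j : ℤ}
    (hq : q ∈ Finset.Icc (-(p:ℤ)) p) (hj : j ∈ Finset.Icc (-(k:ℤ)) k) :
    IntegrableOn (fun x => conj (Y p q x) * Y k j x) (sphere 0 1) μH[2] :=
  ((Complex.continuous_conj.comp_continuousOn (hY.continuousOn_sphere hq)).mul
      (hY.continuousOn_sphere hj)).integrableOn_of_subset_isCompact (isCompact_sphere 0 1)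
    isClosed_sphere.measurableSet subset_rfl hausdorffMeasure_sphere_lt_top.ne

lemma integrableOn_conj_mul_sum (hY : SphHarmFamily Y) {p k : ℕ} {q : ℤ}
    (hq : q ∈ Finset.Icc (-(p:ℤ)) p) {s : Finset ℤ} (hs : s ⊆ Finset.Icc (-(k:ℤ)) k)
    (b : ℤ → ℂ) :
    IntegrableOn (fun x => conj (Y p q x) * ∑ j ∈ s, b j * Y k j x) (sphere 0 1) μH[2] := by
  simp_rw [Finset.mul_sum, mul_left_comm (conj _)]
  exact integrable_finsetSum _ fun j hj => (hY.integrableOn_conj_mul hq (hs hj)).const_mul _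

lemma integral_conj_mul_sum (hY : SphHarmFamily Y) {p k : ℕ} {q : ℤ}
    (hq : q ∈ Finset.Icc (-(p:ℤ)) p) {s : Finset ℤ} (hs : s ⊆ Finset.Icc (-(k:ℤ)) k)
    (b : ℤ → ℂ) :
    ∫ x in sphere 0 1, conj (Y p q x) * ∑ j ∈ s, b j * Y k j x ∂μH[2] =
      if p = k ∧ q ∈ s then b q else 0 := by
  simp_rw [Finset.mul_sum, mul_left_comm (conj _)]
  rw [integral_finsetSum _ fun j hj => (hY.integrableOn_conj_mul hq (hs hj)).const_mul _]
  simp_rw [integral_const_mul]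
  rw [Finset.sum_congr rfl fun j hj => by rw [hY.orthonormal p q k j hq (hs hj)]]
  by_cases hpk : p = k <;> simp [hpk]

lemma integral_conj_mul_of_eqOn (hY : SphHarmFamily Y) {p k l : ℕ} {q : ℤ}
    (hq : q ∈ Finset.Icc (-(p:ℤ)) p) {s t : Finset ℤ} (hs : s ⊆ Finset.Icc (-(k:ℤ)) k)
    (ht : t ⊆ Finset.Icc (-(l:ℤ)) l) (α β : ℂ) (b d : ℤ → ℂ) {f : E3 → ℂ}
    (hf : Set.EqOn f
      (fun x => α * ∑ j ∈ s, b j * Y k j x + β * ∑ j ∈ t, d j * Y l j x) (sphere 0 1)) :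
    ∫ x in sphere 0 1, conj (Y p q x) * f x ∂μH[2] =
      α * (if p = k ∧ q ∈ s then b q else 0) + β * (if p = l ∧ q ∈ t then d q else 0) := by
  rw [setIntegral_congr_fun isClosed_sphere.measurableSet fun x hx => by
    rw [hf hx, mul_add, mul_left_comm, mul_left_comm _ β]]
  rw [integral_add ((hY.integrableOn_conj_mul_sum hq hs b).const_mul α)
      ((hY.integrableOn_conj_mul_sum hq ht d).const_mul β), integral_const_mul,
    integral_const_mul, hY.integral_conj_mul_sum hq hs, hY.integral_conj_mul_sum hq ht]

end SphHarmFamily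

theorem sphericalHarmonic_moment_identities_general
    (Y : ℕ → ℤ → E3 → ℂ) (hY : SphHarmFamily Y)
    (n : ℕ) (m : ℤ)
    (a c : ℤ → Fin 3 → ℂ)
    (ha : ∀ x ∈ sphere (0:E3) 1, ∀ i : Fin 3,
      cgrad (Y n m) x i + (n : ℂ) * Y n m x * ((x i : ℝ) : ℂ) =
        ∑ q ∈ Finset.Icc (-((n:ℤ)-1)) ((n:ℤ)-1), a q i * Y (n-1) q x)
    (hc : ∀ x ∈ sphere (0:E3) 1, ∀ i : Fin 3,
      -cgrad (Y n m) x i + ((n : ℂ) + 1) * Y n m x * ((x i : ℝ) : ℂ) =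
        ∑ q ∈ Finset.Icc (-((n:ℤ)+1)) ((n:ℤ)+1), c q i * Y (n+1) q x) :
    (∀ q ∈ Finset.Icc (-((n:ℤ)-1)) ((n:ℤ)-1), ∀ i : Fin 3,
      (∫ x in sphere (0:E3) 1, conj (Y (n-1) q x) * Y n m x * ((x i : ℝ) : ℂ) ∂μH[2])
        = a q i / (2*(n:ℂ)+1)) ∧
    (∀ q ∈ Finset.Icc (-((n:ℤ)-1)) ((n:ℤ)-1), ∀ i : Fin 3,
      (∫ x in sphere (0:E3) 1, conj (Y (n-1) q x) * cgrad (Y n m) x i ∂μH[2])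
        = (((n:ℂ)+1)/(2*(n:ℂ)+1)) * a q i) ∧
    (∀ q ∈ Finset.Icc (-((n:ℤ)+1)) ((n:ℤ)+1), ∀ i : Fin 3,
      (∫ x in sphere (0:E3) 1, conj (Y (n+1) q x) * Y n m x * ((x i : ℝ) : ℂ) ∂μH[2])
        = c q i / (2*(n:ℂ)+1)) ∧
    (∀ q ∈ Finset.Icc (-((n:ℤ)+1)) ((n:ℤ)+1), ∀ i : Fin 3,
      (∫ x in sphere (0:E3) 1, conj (Y (n+1) q x) * cgrad (Y n m) x i ∂μH[2])
        = (-(n:ℂ)/(2*(n:ℂ)+1)) * c q i) ∧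
    (∀ p : ℕ, p ≠ n - 1 → p ≠ n + 1 → ∀ q ∈ Finset.Icc (-(p:ℤ)) (p:ℤ), ∀ i : Fin 3,
      (∫ x in sphere (0:E3) 1, conj (Y p q x) * Y n m x * ((x i : ℝ) : ℂ) ∂μH[2]) = 0 ∧
      (∫ x in sphere (0:E3) 1, conj (Y p q x) * cgrad (Y n m) x i ∂μH[2]) = 0) := by
  have h2n : (2 * (n:ℂ) + 1) ≠ 0 := by exact_mod_cast (2 * n).succ_ne_zero
  set IA := Finset.Icc (-((n:ℤ)-1)) ((n:ℤ)-1)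
  set IC := Finset.Icc (-((n:ℤ)+1)) ((n:ℤ)+1)
  -- only an inclusion: for `n = 0`, `IA` is empty while `n - 1 = 0` in `ℕ`
  have hsA : IA ⊆ Finset.Icc (-((n-1:ℕ):ℤ)) ((n-1:ℕ):ℤ) := fun j => by
    simp only [IA, Finset.mem_Icc]; omega
  have hsC : IC ⊆ Finset.Icc (-((n+1:ℕ):ℤ)) ((n+1:ℕ):ℤ) := fun j => by
    simp only [IC, Finset.mem_Icc]; omega
  have moment : ∀ (p : ℕ) (q : ℤ), q ∈ Finset.Icc (-(p:ℤ)) p → ∀ i : Fin 3,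
      (∫ x in sphere (0:E3) 1, conj (Y p q x) * Y n m x * ((x i : ℝ) : ℂ) ∂μH[2]) =
        (2 * (n:ℂ) + 1)⁻¹ * (if p = n - 1 ∧ q ∈ IA then a q i else 0) +
          (2 * (n:ℂ) + 1)⁻¹ * (if p = n + 1 ∧ q ∈ IC then c q i else 0) ∧
      (∫ x in sphere (0:E3) 1, conj (Y p q x) * cgrad (Y n m) x i ∂μH[2]) =
        ((n + 1) / (2 * (n:ℂ) + 1)) * (if p = n - 1 ∧ q ∈ IA then a q i else 0) +
          (-n / (2 * (n:ℂ) + 1)) * (if p = n + 1 ∧ q ∈ IC then c q i else 0) := by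
    intro p q hq i
    constructor
    · simp_rw [mul_assoc]
      refine hY.integral_conj_mul_of_eqOn hq hsA hsC _ _ (a · i) (c · i) fun x hx => ?_
      simp only [← ha x hx i, ← hc x hx i]
      rw [← mul_add, eq_inv_mul_iff_mul_eq₀ h2n]
      ring
    · refine hY.integral_conj_mul_of_eqOn hq hsA hsC _ _ (a · i) (c · i) fun x hx => ?_
      simp only [← ha x hx i, ← hc x hx i]
      rw [div_mul_eq_mul_div, div_mul_eq_mul_div, ← add_div, eq_div_iff h2n]
      ring
  have hne : n - 1 ≠ n + 1 := by omega
  refine ⟨fun q hq i => ?_, fun q hq i => ?_, fun q hq i => ?_, fun q hq i => ?_,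
    fun p hp₁ hp₂ q hq i => ?_⟩
  · simp [(moment _ q (hsA hq) i).1, hq, hne, div_eq_inv_mul]
  · simp [(moment _ q (hsA hq) i).2, hq, hne]
  · simp [(moment _ q (hsC hq) i).1, hq, hne.symm, div_eq_inv_mul]
  · simp [(moment _ q (hsC hq) i).2, hq, hne.symm]
  · simp [moment p q hq i, hp₁, hp₂]

/-- Proposition 2.1 (integral identities): for `n ≥ 1`, `-n ≤ m ≤ n`, the moments of
`Y_n^m ν` and `∇_𝕊 Y_n^m` against `conj (Y_p^q)` are given by the expansion coefficients
`a_{n-1,m}^q`, `c_{n+1,m}^q` of `ℐ_{n-1}^m = ∇_𝕊 Y_n^m + n Y_n^m ν` and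
`𝒩_{n+1}^m = -∇_𝕊 Y_n^m + (n+1) Y_n^m ν`, and vanish for `p ∉ {n-1, n+1}`. -/
theorem sphericalHarmonic_moment_identities
    (Y : ℕ → ℤ → E3 → ℂ) (hY : SphHarmFamily Y)
    (n : ℕ) (hn : 1 ≤ n) (m : ℤ) (hm : m ∈ Finset.Icc (-(n:ℤ)) (n:ℤ))
    (a c : ℤ → Fin 3 → ℂ)
    (ha : ∀ x ∈ sphere (0:E3) 1, ∀ i : Fin 3,
      cgrad (Y n m) x i + (n : ℂ) * Y n m x * ((x i : ℝ) : ℂ) =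
        ∑ q ∈ Finset.Icc (-((n:ℤ)-1)) ((n:ℤ)-1), a q i * Y (n-1) q x)
    (hc : ∀ x ∈ sphere (0:E3) 1, ∀ i : Fin 3,
      -cgrad (Y n m) x i + ((n : ℂ) + 1) * Y n m x * ((x i : ℝ) : ℂ) =
        ∑ q ∈ Finset.Icc (-((n:ℤ)+1)) ((n:ℤ)+1), c q i * Y (n+1) q x) :
    (∀ q ∈ Finset.Icc (-((n:ℤ)-1)) ((n:ℤ)-1), ∀ i : Fin 3,
      (∫ x in sphere (0:E3) 1, conj (Y (n-1) q x) * Y n m x * ((x i : ℝ) : ℂ) ∂μH[2])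
        = a q i / (2*(n:ℂ)+1)) ∧
    (∀ q ∈ Finset.Icc (-((n:ℤ)-1)) ((n:ℤ)-1), ∀ i : Fin 3,
      (∫ x in sphere (0:E3) 1, conj (Y (n-1) q x) * cgrad (Y n m) x i ∂μH[2])
        = (((n:ℂ)+1)/(2*(n:ℂ)+1)) * a q i) ∧
    (∀ q ∈ Finset.Icc (-((n:ℤ)+1)) ((n:ℤ)+1), ∀ i : Fin 3,
      (∫ x in sphere (0:E3) 1, conj (Y (n+1) q x) * Y n m x * ((x i : ℝ) : ℂ) ∂μH[2])
        = c q i / (2*(n:ℂ)+1)) ∧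
    (∀ q ∈ Finset.Icc (-((n:ℤ)+1)) ((n:ℤ)+1), ∀ i : Fin 3,
      (∫ x in sphere (0:E3) 1, conj (Y (n+1) q x) * cgrad (Y n m) x i ∂μH[2])
        = (-(n:ℂ)/(2*(n:ℂ)+1)) * c q i) ∧
    (∀ p : ℕ, p ≠ n - 1 → p ≠ n + 1 → ∀ q ∈ Finset.Icc (-(p:ℤ)) (p:ℤ), ∀ i : Fin 3,
      (∫ x in sphere (0:E3) 1, conj (Y p q x) * Y n m x * ((x i : ℝ) : ℂ) ∂μH[2]) = 0 ∧
      (∫ x in sphere (0:E3) 1, conj (Y p q x) * cgrad (Y n m) x i ∂μH[2]) = 0) :=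
  sphericalHarmonic_moment_identities_general Y hY n m a c ha hc
end
end

section
/- Let k > 0 and n, p ∈ ℕ₀, −p ≤ m ≤ p. On ℝ³ ∖ {0}, with Y_p^m and ∇_𝕊 Y_p^m extended 0-homogeneously and ν(x) = x/|x|, and with ∇w the Jacobian matrix (∂_j w_i) of a vector field w, the following hold: (1) ∇( h_n(k|x|) ∇_𝕊 Y_p^m ) ν = k h'_n(k|x|) ∇_𝕊 Y_p^m; (2) ( ∇( h_n(k|x|) ∇_𝕊 Y_p^m ) )^T ν = −h_n(k|x|) ∇_𝕊 Y_p^m / |x|; (3) ∇( h_n(k|x|) Y_p^m ν ) ν = k h'_n(k|x|) Y_p^m ν; (4) ( ∇( h_n(k|x|) Y_p^m ν ) )^T ν = k h'_n(k|x|) Y_p^m ν + ( h_n(k|x|)/|x| ) ∇_𝕊 Y_p^m; (5) ∇( h_n(k|x|) (∇_𝕊 Y_p^m ∧ ν) ) ν = k h'_n(k|x|) (∇_𝕊 Y_p^m ∧ ν); (6) ( ∇( h_n(k|x|) (∇_𝕊 Y_p^m ∧ ν) ) )^T ν = −( h_n(k|x|)/|x| ) (∇_𝕊 Y_p^m ∧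 ν). -/
/- Polariton resonances / CALR for the elastic system beyond the quasi-static limit:
   general setup. -/

noncomputable section
open MeasureTheory Metric MvPolynomial Filter
open scoped Topology ComplexConjugate

/-- The operator `f ↦ z⁻¹ f'` appearing in the Rayleigh formulas. -/
def sphD (f : ℂ → ℂ) : ℂ → ℂ := fun z => deriv f z / z

/-- Spherical Bessel function of the first kind:
`j_n(z) = (-z)^n (z⁻¹ d/dz)^n (sin z / z)`. -/
def sbJ (n : ℕ) (z : ℂ) : ℂ := (-z) ^ n * (sphD^[n] (fun w : ℂ => Complex.sin w / w)) z

/-- Spherical Hankel function of the first kind: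
`h_n(z) = -i (-z)^n (z⁻¹ d/dz)^n (e^{iz} / z)`. -/
def sbH (n : ℕ) (z : ℂ) : ℂ :=
  -Complex.I * (-z) ^ n * (sphD^[n] (fun w : ℂ => Complex.exp (Complex.I * w) / w)) z

/-- Derivative `j'_n`. -/
def sbJ' (n : ℕ) (z : ℂ) : ℂ := deriv (sbJ n) z

/-- Second derivative `j''_n`. -/
def sbJ'' (n : ℕ) (z : ℂ) : ℂ := deriv (deriv (sbJ n)) z

/-- Derivative `h'_n`. -/
def sbH' (n : ℕ) (z : ℂ) : ℂ := deriv (sbH n) z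

/-- Radial projection `x ↦ x/|x|` to the unit sphere. -/
def unitize (x : E3) : E3 := ‖x‖⁻¹ • x

/-- Unit outward normal `ν(x) = x/|x|`, as a complex 3-vector. -/
def nuHat (x : E3) : Fin 3 → ℂ := fun i => ((‖x‖⁻¹ * x i : ℝ) : ℂ)

/-- Cross product of complex 3-vectors. -/
def ccross (u v : Fin 3 → ℂ) : Fin 3 → ℂ :=
  ![u 1 * v 2 - u 2 * v 1, u 2 * v 0 - u 0 * v 2, u 0 * v 1 - u 1 * v 0]

/-- Vectorial spherical harmonic `𝒯_n^m := ∇_𝕊 Y_n^m ∧ ν`, evaluated at `x/|x|`. -/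
def vshT (Y : ℕ → ℤ → E3 → ℂ) (n : ℕ) (m : ℤ) (x : E3) : Fin 3 → ℂ :=
  ccross (cgrad (Y n m) (unitize x)) (nuHat x)

/-- Vectorial spherical harmonic `ℐ_{n-1}^m := ∇_𝕊 Y_n^m + n Y_n^m ν`, at `x/|x|`. -/
def vshI (Y : ℕ → ℤ → E3 → ℂ) (n : ℕ) (m : ℤ) (x : E3) : Fin 3 → ℂ :=
  fun i => cgrad (Y n m) (unitize x) i + (n : ℂ) * Y n m (unitize x) * nuHat x i

/-- Vectorial spherical harmonic `𝒩_{n+1}^m := -∇_𝕊 Y_n^m + (n+1) Y_n^m ν`, at `x/|x|`. -/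
def vshN (Y : ℕ → ℤ → E3 → ℂ) (n : ℕ) (m : ℤ) (x : E3) : Fin 3 → ℂ :=
  fun i => -cgrad (Y n m) (unitize x) i + ((n : ℂ) + 1) * Y n m (unitize x) * nuHat x i


/-!
Each field is `F(|x|) B(x)` with `F = h_n(k ·)` and `B` homogeneous of degree zero, so the
derivative along `ν` only sees `F` (Euler's identity kills `B`), giving `k h'_n(k|x|) B`.
For the transposed Jacobian, `(∇w)ᵀ ν = ∇(w · ν) - (∇ν)ᵀ w` with
`∂ᵢ νⱼ = (δᵢⱼ - νᵢ νⱼ) / |x|`. The fields `∇_𝕊 Y` and `∇_𝕊 Y ∧ ν` are tangential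
(Euler again, resp. `(u ∧ v) · v = 0`), so only `-w / |x|` survives; for `Y ν` the
correction vanishes and `w · ν = h_n Y`.
-/

def ZeroHomogeneous {E F : Type*} [AddCommGroup E] [Module ℝ E] (A : E → F) : Prop :=
  ∀ t : ℝ, 0 < t → ∀ x : E, x ≠ 0 → A (t • x) = A x

section Homogeneous

variable {E F : Type*} [NormedAddCommGroup E] [NormedSpace ℝ E] [NormedAddCommGroup F]
  [NormedSpace ℝ F] {A : E → F} {x : E}

theorem fderiv_apply_self_eq_zero (hd : DifferentiableAt ℝ A x)
    (hray : ∀ t : ℝ, 0 < t → A (t • x) = A x) : fderiv ℝ A x x = 0 := by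
  have hline : HasDerivAt (fun t : ℝ => t • x) x 1 := by
    simpa using (hasDerivAt_id (1 : ℝ)).smul_const x
  have hcomp : HasDerivAt (fun t : ℝ => A (t • x)) (fderiv ℝ A x x) 1 :=
    hd.hasFDerivAt.comp_hasDerivAt_of_eq 1 hline (one_smul ℝ x).symm
  have hconst : (fun t : ℝ => A (t • x)) =ᶠ[𝓝 1] fun _ => A x := by
    filter_upwards [lt_mem_nhds one_pos] with t ht using hray t ht
  exact hcomp.unique ((hasDerivAt_const 1 (A x)).congr_of_eventuallyEq hconst)

theorem ZeroHomogeneous.fderiv_eq_smul_fderiv_smul (hA : ZeroHomogeneous A) (hx : x ≠ 0) {c : ℝ}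
    (hc : 0 < c) : fderiv ℝ A x = c • fderiv ℝ A (c • x) := by
  have hloc : (fun y => A (c • y)) =ᶠ[𝓝 x] A := by
    filter_upwards [isOpen_ne.mem_nhds hx] with y hy using hA c hc y hy
  rw [← hloc.fderiv_eq, fderiv_comp_smul]

end Homogeneous

theorem hasFDerivAt_norm_of_ne_zero {F : Type*} [NormedAddCommGroup F] [InnerProductSpace ℝ F]
    {x : F} (hx : x ≠ 0) : HasFDerivAt (fun y : F => ‖y‖) (‖x‖⁻¹ • innerSL ℝ x) x := by
  have h := (hasStrictFDerivAt_norm_sq x).hasFDerivAt.sqrt (by positivity)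
  simp only [Real.sqrt_sq (norm_nonneg _)] at h
  convert h using 1
  ext v
  simp only [smul_apply, coe_innerSL_apply, smul_eq_mul, one_div, mul_inv_rev,
    nsmul_eq_mul, Nat.cast_ofNat]
  field_simp

theorem differentiableAt_comp_norm {F : Type*} [NormedAddCommGroup F] [InnerProductSpace ℝ F]
    {φ : ℝ → ℂ} {x : F} (hx : x ≠ 0) (hφ : DifferentiableAt ℝ φ ‖x‖) :
    DifferentiableAt ℝ (fun y => φ ‖y‖) x :=
  hφ.comp x (hasFDerivAt_norm_of_ne_zero hx).differentiableAt

theorem norm_unitize {x : E3} (hx : x ≠ 0) : ‖unitize x‖ = 1 := by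
  simp [unitize, norm_smul, hx]

theorem unitize_ne_zero {x : E3} (hx : x ≠ 0) : unitize x ≠ 0 :=
  norm_ne_zero_iff.1 (by simp [norm_unitize hx])

theorem unitize_smul {x : E3} {c : ℝ} (hc : 0 < c) : unitize (c • x) = unitize x := by
  simp [unitize, norm_smul, abs_of_pos hc, smul_smul, hc.ne']

theorem nuHat_smul {x : E3} {c : ℝ} (hc : 0 < c) : nuHat (c • x) = nuHat x :=
  funext fun j => congrArg (fun u : E3 => ((u j : ℝ) : ℂ)) (unitize_smul hc)

theorem nuHat_dotProduct_self {x : E3} (hx : x ≠ 0) : nuHat x ⬝ᵥ nuHat x = 1 := by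
  have h : ∑ j, unitize x j * unitize x j = 1 := by
    simpa [norm_unitize hx, sq] using (EuclideanSpace.real_norm_sq_eq (unitize x)).symm
  simp only [dotProduct, nuHat]
  exact_mod_cast h

theorem ZeroHomogeneous.apply_unitize {F : Type*} {A : E3 → F} (hA : ZeroHomogeneous A)
    {x : E3} (hx : x ≠ 0) : A (unitize x) = A x :=
  hA _ (inv_pos.2 (norm_pos_iff.2 hx)) x hx

theorem contDiffAt_unitize {x : E3} (hx : x ≠ 0) {n : WithTop ℕ∞} : ContDiffAt ℝ n unitize x :=
  ((contDiffAt_norm ℝ hx).inv (norm_ne_zero_iff.2 hx)).smul contDiffAt_id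

theorem contDiffAt_nuHat {x : E3} (hx : x ≠ 0) {n : WithTop ℕ∞} (j : Fin 3) :
    ContDiffAt ℝ n (fun y => nuHat y j) x :=
  Complex.ofRealCLM.contDiff.contDiffAt.comp x
    ((EuclideanSpace.proj j : E3 →L[ℝ] ℝ).contDiff.contDiffAt.comp x (contDiffAt_unitize hx))

theorem differentiableAt_nuHat {x : E3} (hx : x ≠ 0) (j : Fin 3) :
    DifferentiableAt ℝ (fun y => nuHat y j) x :=
  (contDiffAt_nuHat (n := 1) hx j).differentiableAt one_ne_zero

section Gradient

variable {f g : E3 → ℂ} {x : E3}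

theorem Filter.EventuallyEq.cgrad_eq (h : f =ᶠ[𝓝 x] g) : cgrad f x = cgrad g x := by
  unfold cgrad
  rw [h.fderiv_eq]

theorem cgrad_dotProduct_nuHat (f : E3 → ℂ) (x : E3) :
    cgrad f x ⬝ᵥ nuHat x = fderiv ℝ f x (unitize x) := by
  have hu : unitize x = ∑ j, unitize x j • EuclideanSpace.single j (1 : ℝ) := by
    simpa using ((EuclideanSpace.basisFun (Fin 3) ℝ).sum_repr (unitize x)).symm
  rw [hu, map_sum]
  simp [dotProduct, cgrad, nuHat, unitize, Complex.real_smul, mul_comm]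

theorem cgrad_mul (hf : DifferentiableAt ℝ f x) (hg : DifferentiableAt ℝ g x) (i : Fin 3) :
    cgrad (fun y => f y * g y) x i = f x * cgrad g x i + g x * cgrad f x i := by
  simp [cgrad, fderiv_fun_mul hf hg]

theorem cgrad_sum {ι : Type*} (s : Finset ι) {f : ι → E3 → ℂ}
    (hf : ∀ j ∈ s, DifferentiableAt ℝ (f j) x) (i : Fin 3) :
    cgrad (fun y => ∑ j ∈ s, f j y) x i = ∑ j ∈ s, cgrad (f j) x i := by
  simp [cgrad, fderiv_fun_sum hf]

theorem cgrad_coord (j i : Fin 3) :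
    cgrad (fun y : E3 => ((y j : ℝ) : ℂ)) x i = if i = j then 1 else 0 := by
  have h : HasFDerivAt (fun y : E3 => ((y j : ℝ) : ℂ))
      (Complex.ofRealCLM.comp (EuclideanSpace.proj j : E3 →L[ℝ] ℝ)) x :=
    (Complex.ofRealCLM.comp (EuclideanSpace.proj j : E3 →L[ℝ] ℝ)).hasFDerivAt
  simp only [cgrad, h.fderiv]
  split_ifs with hij <;> simp [hij, Ne.symm]

theorem cgrad_radial {φ : ℝ → ℂ} {φ' : ℂ} (hx : x ≠ 0) (hφ : HasDerivAt φ φ' ‖x‖) (i : Fin 3) :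
    cgrad (fun y => φ ‖y‖) x i = φ' * nuHat x i := by
  have h := hφ.hasFDerivAt.comp x (hasFDerivAt_norm_of_ne_zero hx)
  unfold cgrad
  rw [show (fun y : E3 => φ ‖y‖) = φ ∘ norm from rfl, h.fderiv]
  simp only [ContinuousLinearMap.comp_smulₛₗ, map_inv₀, Real.ringHom_apply,
    smul_apply, ContinuousLinearMap.comp_apply, coe_innerSL_apply,
    EuclideanSpace.inner_single_right, one_mul, ContinuousLinearMap.toSpanSingleton_apply,
    Complex.real_smul, Complex.ofReal_inv, nuHat, Complex.ofReal_mul]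
  ring

theorem cgrad_nuHat (hx : x ≠ 0) (i j : Fin 3) :
    cgrad (fun y => nuHat y j) x i
      = ((if i = j then 1 else 0) - nuHat x i * nuHat x j) / ‖x‖ := by
  have hinv : HasDerivAt (fun t : ℝ => ((t⁻¹ : ℝ) : ℂ)) (((-(‖x‖ ^ 2)⁻¹ : ℝ)) : ℂ) ‖x‖ :=
    (hasDerivAt_inv (norm_ne_zero_iff.2 hx)).ofReal_comp
  have hsplit : (fun y => nuHat y j) = fun y => ((‖y‖⁻¹ : ℝ) : ℂ) * ((y j : ℝ) : ℂ) := by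
    funext y; simp [nuHat]
  rw [hsplit, cgrad_mul (differentiableAt_comp_norm hx hinv.differentiableAt) (by fun_prop), cgrad_radial hx hinv, cgrad_coord]
  have hr : (‖x‖ : ℂ) ≠ 0 := by exact_mod_cast norm_ne_zero_iff.2 hx
  simp only [nuHat]
  push_cast
  field_simp
  ring

end Gradient

section Jacobian

variable {x : E3}

theorem sum_cgrad_radial_mul_mul_nuHat {φ : ℝ → ℂ} {φ' : ℂ} {B : E3 → ℂ} (hx : x ≠ 0)
    (hφ : HasDerivAt φ φ' ‖x‖) (hB : DifferentiableAt ℝ B x)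
    (hray : ∀ t : ℝ, 0 < t → B (t • x) = B x) :
    ∑ j, cgrad (fun y => φ ‖y‖ * B y) x j * nuHat x j = φ' * B x := by
  have hvec : cgrad (fun y => φ ‖y‖ * B y) x = φ ‖x‖ • cgrad B x + (B x * φ') • nuHat x := by
    funext j
    simp [cgrad_mul (differentiableAt_comp_norm hx hφ.differentiableAt) hB, cgrad_radial hx hφ, mul_assoc]
  have hEuler : fderiv ℝ B x (unitize x) = 0 := by
    rw [unitize, map_smul, fderiv_apply_self_eq_zero hB hray, smul_zero]
  change cgrad _ x ⬝ᵥ nuHat x = _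
  rw [hvec, add_dotProduct, smul_dotProduct, smul_dotProduct, cgrad_dotProduct_nuHat, hEuler,
    nuHat_dotProduct_self hx]
  simp [mul_comm]

theorem sum_cgrad_mul_nuHat {w : E3 → Fin 3 → ℂ} (hx : x ≠ 0)
    (hw : ∀ j, DifferentiableAt ℝ (fun y => w y j) x) (i : Fin 3) :
    ∑ j, cgrad (fun y => w y j) x i * nuHat x j
      = cgrad (fun y => w y ⬝ᵥ nuHat y) x i - (w x i - (w x ⬝ᵥ nuHat x) * nuHat x i) / ‖x‖ := by
  have hν := differentiableAt_nuHat hx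
  have hprod : cgrad (fun y => w y ⬝ᵥ nuHat y) x i
      = ∑ j, (w x j * cgrad (fun y => nuHat y j) x i + nuHat x j * cgrad (fun y => w y j) x i) :=
    (cgrad_sum (f := fun j y => w y j * nuHat y j) Finset.univ
      (fun j _ => (hw j).mul (hν j)) i).trans
      (Finset.sum_congr rfl fun j _ => cgrad_mul (hw j) (hν j) i)
  have hcorr : ∑ j, w x j * cgrad (fun y => nuHat y j) x i
      = (w x i - (w x ⬝ᵥ nuHat x) * nuHat x i) / ‖x‖ := by
    simp only [cgrad_nuHat hx, mul_div_assoc', ← Finset.sum_div, mul_sub, Finset.sum_sub_distrib,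
      mul_ite, mul_one, mul_zero, Finset.sum_ite_eq, Finset.mem_univ, if_true, dotProduct,
      Finset.sum_mul]
    congr 2
    exact Finset.sum_congr rfl fun j _ => by ring
  rw [hprod, Finset.sum_add_distrib, hcorr, add_sub_cancel_left]
  exact Finset.sum_congr rfl fun j _ => mul_comm _ _

theorem sum_cgrad_mul_mul_nuHat_of_tangential {f : E3 → ℂ} {T : E3 → Fin 3 → ℂ} (hx : x ≠ 0)
    (hf : DifferentiableAt ℝ f x) (hT : ∀ j, DifferentiableAt ℝ (fun y => T y j) x)
    (htan : ∀ y, y ≠ 0 → T y ⬝ᵥ nuHat y = 0) (i : Fin 3) :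
    ∑ j, cgrad (fun y => f y * T y j) x i * nuHat x j = -(f x * T x i / ‖x‖) := by
  have hzero : ∀ y, y ≠ 0 → (fun j => f y * T y j) ⬝ᵥ nuHat y = 0 := fun y hy => by
    rw [show (fun j => f y * T y j) = f y • T y from rfl, smul_dotProduct, htan y hy, smul_zero]
  have hloc : (fun y => (fun j => f y * T y j) ⬝ᵥ nuHat y) =ᶠ[𝓝 x] fun _ => 0 := by
    filter_upwards [isOpen_ne.mem_nhds hx] with y hy using hzero y hy
  rw [sum_cgrad_mul_nuHat (w := fun y j => f y * T y j) hx (fun j => hf.mul (hT j)),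
    hloc.cgrad_eq, hzero x hx]
  simp [cgrad]

theorem sum_cgrad_mul_nuHat_mul_nuHat {W : E3 → ℂ} (hx : x ≠ 0) (hW : DifferentiableAt ℝ W x)
    (i : Fin 3) : ∑ j, cgrad (fun y => W y * nuHat y j) x i * nuHat x j = cgrad W x i := by
  have hnormal : ∀ y, y ≠ 0 → (fun j => W y * nuHat y j) ⬝ᵥ nuHat y = W y := fun y hy => by
    rw [show (fun j => W y * nuHat y j) = W y • nuHat y from rfl, smul_dotProduct,
      nuHat_dotProduct_self hy, smul_eq_mul, mul_one]
  have hloc : (fun y => (fun j => W y * nuHat y j) ⬝ᵥ nuHat y) =ᶠ[𝓝 x] W := by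
    filter_upwards [isOpen_ne.mem_nhds hx] with y hy using hnormal y hy
  rw [sum_cgrad_mul_nuHat (w := fun y j => W y * nuHat y j) hx
      (fun j => hW.mul (differentiableAt_nuHat hx j)),
    hloc.cgrad_eq, hnormal x hx]
  simp

end Jacobian

theorem ZeroHomogeneous.cgrad_comp_unitize {A : E3 → ℂ} (hA : ZeroHomogeneous A) {x : E3}
    (hx : x ≠ 0) (i : Fin 3) :
    cgrad (fun y => A (unitize y)) x i = cgrad A (unitize x) i / ‖x‖ := by
  have hloc : (fun y => A (unitize y)) =ᶠ[𝓝 x] A := by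
    filter_upwards [isOpen_ne.mem_nhds hx] with y hy using hA.apply_unitize hy
  rw [hloc.cgrad_eq]
  simp [cgrad, hA.fderiv_eq_smul_fderiv_smul hx (inv_pos.2 (norm_pos_iff.2 hx)), unitize,
    Complex.real_smul, div_eq_inv_mul]

theorem ZeroHomogeneous.cgrad_unitize_dotProduct_nuHat {A : E3 → ℂ} (hA : ZeroHomogeneous A)
    {y : E3} (hy : y ≠ 0) (hd : DifferentiableAt ℝ A (unitize y)) :
    cgrad A (unitize y) ⬝ᵥ nuHat y = 0 := by
  have hpos : (0 : ℝ) < ‖y‖⁻¹ := inv_pos.2 (norm_pos_iff.2 hy)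
  have hu : unitize (unitize y) = unitize y := unitize_smul hpos
  rw [show nuHat y = nuHat (unitize y) from (nuHat_smul hpos).symm, cgrad_dotProduct_nuHat, hu]
  exact fderiv_apply_self_eq_zero hd fun t ht => hA t ht _ (unitize_ne_zero hy)

theorem differentiableAt_cgrad_comp_unitize {A : E3 → ℂ} {x : E3} (hx : x ≠ 0)
    (hA : ContDiffAt ℝ 2 A (unitize x)) (j : Fin 3) :
    DifferentiableAt ℝ (fun y => cgrad A (unitize y) j) x := by
  have h : ContDiffAt ℝ 1 (fun z => fderiv ℝ A z (EuclideanSpace.single j 1)) (unitize x) :=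
    (hA.fderiv_right (m := 1) (by norm_num)).clm_apply contDiffAt_const
  exact (h.comp x (contDiffAt_unitize hx)).differentiableAt one_ne_zero

theorem ccross_eq_crossProduct (u v : Fin 3 → ℂ) : ccross u v = crossProduct u v :=
  (cross_apply u v).symm

theorem ccross_dotProduct_right (u v : Fin 3 → ℂ) : ccross u v ⬝ᵥ v = 0 := by
  rw [ccross_eq_crossProduct, dotProduct_comm, dot_cross_self]

theorem differentiableAt_ccross {u v : E3 → Fin 3 → ℂ} {x : E3}
    (hu : ∀ j, DifferentiableAt ℝ (fun y => u y j) x)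
    (hv : ∀ j, DifferentiableAt ℝ (fun y => v y j) x) (j : Fin 3) :
    DifferentiableAt ℝ (fun y => ccross (u y) (v y) j) x := by
  fin_cases j <;>
    simp only [ccross, Fin.isValue, Fin.zero_eta, Fin.mk_one, Fin.reduceFinMk, Matrix.cons_val_zero,
      Matrix.cons_val_one, Matrix.cons_val] <;>
    exact ((hu _).mul (hv _)).sub ((hu _).mul (hv _))

theorem DifferentiableOn.sphD {f : ℂ → ℂ} (hf : DifferentiableOn ℂ f {z | z ≠ 0}) :
    DifferentiableOn ℂ (sphD f) {z | z ≠ 0} :=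
  ((hf.analyticOnNhd isOpen_ne).deriv.differentiableOn).div differentiableOn_id fun _ hz => hz

theorem differentiableOn_sbH (n : ℕ) : DifferentiableOn ℂ (sbH n) {z | z ≠ 0} := by
  have hseed : DifferentiableOn ℂ (fun w : ℂ => Complex.exp (Complex.I * w) / w) {z | z ≠ 0} :=
    (by fun_prop : Differentiable ℂ fun w : ℂ => Complex.exp (Complex.I * w)).differentiableOn.div
      differentiableOn_id fun _ hz => hz
  have hiter : ∀ j : ℕ, DifferentiableOn ℂ
      (sphD^[j] fun w : ℂ => Complex.exp (Complex.I * w) / w) {z | z ≠ 0} := by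
    intro j
    induction j with
    | zero => exact hseed
    | succ j ih => rw [Function.iterate_succ_apply']; exact ih.sphD
  exact ((differentiableOn_const _).mul (differentiableOn_id.neg.pow n)).mul (hiter n)

theorem hasDerivAt_sbH_ofReal_mul (n : ℕ) {k t : ℝ} (hkt : k * t ≠ 0) :
    HasDerivAt (fun s : ℝ => sbH n ((k * s : ℝ) : ℂ)) ((k : ℂ) * sbH' n ((k * t : ℝ) : ℂ)) t := by
  have hH : HasDerivAt (sbH n) (sbH' n ((k * t : ℝ) : ℂ)) ((k * t : ℝ) : ℂ) :=
    ((differentiableOn_sbH n).differentiableAt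
      (isOpen_ne.mem_nhds (Complex.ofReal_ne_zero.2 hkt))).hasDerivAt
  simpa [Function.comp_def] using hH.comp_ofReal.scomp t ((hasDerivAt_id t).const_mul k)

theorem SphHarmFamily.contDiffAt {Y : ℕ → ℤ → E3 → ℂ} (hY : SphHarmFamily Y) {p : ℕ} {m : ℤ}
    (hm : m ∈ Finset.Icc (-(p : ℤ)) p) {y : E3} (hy : y ≠ 0) {n : WithTop ℕ∞} :
    ContDiffAt ℝ n (Y p m) y := by
  obtain ⟨P, -, hP⟩ := hY.harmonic_poly p m hm
  have hloc : (fun z => eval (nuHat z) P) =ᶠ[𝓝 y] Y p m := by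
    filter_upwards [isOpen_ne.mem_nhds hy] with z hz
    rw [← ZeroHomogeneous.apply_unitize (hY.homog p m) hz,
      hP _ (mem_sphere_zero_iff_norm.2 (norm_unitize hz))]
    rfl
  refine ContDiffAt.congr_of_eventuallyEq ?_ hloc.symm
  have hpoly : ContDiff ℝ n (fun v : Fin 3 → ℂ => eval v P) :=
    (AnalyticOnNhd.eval_linearMap (𝕜 := ℝ) (LinearMap.id : (Fin 3 → ℂ) →ₗ[ℝ] _) P).contDiff
  exact hpoly.contDiffAt.comp y (contDiffAt_pi.2 fun i => contDiffAt_nuHat hy i)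

/-- Proposition 3.8: Jacobian identities on `ℝ³ \ {0}` for the fields
`h_n(k|x|) ∇_𝕊 Y_p^m`, `h_n(k|x|) Y_p^m ν` and `h_n(k|x|) (∇_𝕊 Y_p^m ∧ ν)`,
with the spherical quantities extended 0-homogeneously, `ν(x) = x/|x|`, `∇w` the
Jacobian matrix `(∂_j w_i)` and `(∇w)^T` its transpose. -/
theorem jacobian_identities_hankel_vsh
    (Y : ℕ → ℤ → E3 → ℂ) (hY : SphHarmFamily Y)
    (k : ℝ) (hk : 0 < k) (n p : ℕ) (m : ℤ) (hm : m ∈ Finset.Icc (-(p:ℤ)) (p:ℤ)) :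
    ∀ x : E3, x ≠ 0 → ∀ i : Fin 3,
      ((∑ j, cgrad (fun y => sbH n ((k * ‖y‖ : ℝ)) * cgrad (Y p m) (unitize y) i) x j
          * nuHat x j)
        = (k:ℂ) * sbH' n ((k * ‖x‖ : ℝ)) * cgrad (Y p m) (unitize x) i) ∧
      ((∑ j, cgrad (fun y => sbH n ((k * ‖y‖ : ℝ)) * cgrad (Y p m) (unitize y) j) x i
          * nuHat x j)
        = -(sbH n ((k * ‖x‖ : ℝ)) * cgrad (Y p m) (unitize x) i / (‖x‖ : ℂ))) ∧
      ((∑ j, cgrad (fun y => sbH n ((k * ‖y‖ : ℝ)) * Y p m (unitize y) * nuHat y i) x j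
          * nuHat x j)
        = (k:ℂ) * sbH' n ((k * ‖x‖ : ℝ)) * Y p m (unitize x) * nuHat x i) ∧
      ((∑ j, cgrad (fun y => sbH n ((k * ‖y‖ : ℝ)) * Y p m (unitize y) * nuHat y j) x i
          * nuHat x j)
        = (k:ℂ) * sbH' n ((k * ‖x‖ : ℝ)) * Y p m (unitize x) * nuHat x i
            + (sbH n ((k * ‖x‖ : ℝ)) / (‖x‖ : ℂ)) * cgrad (Y p m) (unitize x) i) ∧
      ((∑ j, cgrad (fun y => sbH n ((k * ‖y‖ : ℝ))
            * ccross (cgrad (Y p m) (unitize y)) (nuHat y) i) x j * nuHat x j)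
        = (k:ℂ) * sbH' n ((k * ‖x‖ : ℝ))
            * ccross (cgrad (Y p m) (unitize x)) (nuHat x) i) ∧
      ((∑ j, cgrad (fun y => sbH n ((k * ‖y‖ : ℝ))
            * ccross (cgrad (Y p m) (unitize y)) (nuHat y) j) x i * nuHat x j)
        = -(sbH n ((k * ‖x‖ : ℝ)) / (‖x‖ : ℂ))
            * ccross (cgrad (Y p m) (unitize x)) (nuHat x) i) := by
  intro x hx i
  have hYsmooth : ∀ y, y ≠ 0 → ContDiffAt ℝ 2 (Y p m) y := fun y hy => hY.contDiffAt hm hy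
  have hu := unitize_ne_zero hx
  have hF := hasDerivAt_sbH_ofReal_mul n (mul_pos hk (norm_pos_iff.2 hx)).ne'
  have hFd := differentiableAt_comp_norm hx hF.differentiableAt
  have hν := differentiableAt_nuHat hx
  have hV := differentiableAt_cgrad_comp_unitize hx (hYsmooth _ hu)
  have hVtan : ∀ y, y ≠ 0 → cgrad (Y p m) (unitize y) ⬝ᵥ nuHat y = 0 := fun y hy =>
    ZeroHomogeneous.cgrad_unitize_dotProduct_nuHat (hY.homog p m) hy
      ((hYsmooth _ (unitize_ne_zero hy)).differentiableAt two_ne_zero)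
  have hYu : DifferentiableAt ℝ (fun y => Y p m (unitize y)) x :=
    ((hYsmooth _ hu).differentiableAt two_ne_zero).comp x
      ((contDiffAt_unitize (n := 1) hx).differentiableAt one_ne_zero)
  refine ⟨?_, ?_, ?_, ?_, ?_, ?_⟩
  · exact (sum_cgrad_radial_mul_mul_nuHat hx hF (hV i) fun t ht => by rw [unitize_smul ht] :)
  · exact sum_cgrad_mul_mul_nuHat_of_tangential hx hFd hV hVtan i
  · simpa only [mul_assoc] using sum_cgrad_radial_mul_mul_nuHat hx hF (hYu.fun_mul (hν i))
      fun t ht => by rw [unitize_smul ht, nuHat_smul ht]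
  · rw [sum_cgrad_mul_nuHat_mul_nuHat hx (hFd.fun_mul hYu), cgrad_mul hFd hYu,
      cgrad_radial (φ := fun t : ℝ => sbH n ((k * t : ℝ) : ℂ)) hx hF,
      ZeroHomogeneous.cgrad_comp_unitize (hY.homog p m) hx]
    ring
  · exact (sum_cgrad_radial_mul_mul_nuHat hx hF (differentiableAt_ccross hV hν i)
      fun t ht => by rw [unitize_smul ht, nuHat_smul ht] :)
  · rw [sum_cgrad_mul_mul_nuHat_of_tangential hx hFd (differentiableAt_ccross hV hν)
      (fun y _ => ccross_dotProduct_right _ _) i]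
    ring
end
end
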